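/- arXiv:1009.4433 — 3 statements merged into one kernel-verified Lean document; each statement's English description precedes it below -/
import Mathlib

section
/- Let B be a (nontrivial) Boolean algebra, let x be a dual subalgebra of B, and let a, b ∈ B with a, b ∉ x. Then b belongs to the subalgebra of B generated by x ∪ {a} if and only if a belongs to the subalgebra of B generated by x ∪ {b}. -/
variable {β : Type*} [BooleanAlgebra β]

/-- A subalgebra of a Boolean algebra: contains `⊥,⊤`, closed under `⊓`, `⊔`, `ᶜ`. -/
def IsBASub (s : Set β) : Prop :=
  ⊥ ∈ s ∧ ⊤ ∈ s ∧ (∀ a ∈ s, ∀ b ∈ s, a ⊓ b ∈ s) ∧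
    (∀ a ∈ s, ∀ b ∈ s, a ⊔ b ∈ s) ∧ ∀ a ∈ s, aᶜ ∈ s

/-- A dual subalgebra: the union of an ideal and its complementary filter. -/
def IsDualSub (s : Set β) : Prop :=
  ∃ I : Set β, I.Nonempty ∧ (∀ a ∈ I, ∀ b, b ≤ a → b ∈ I) ∧
    (∀ a ∈ I, ∀ b ∈ I, a ⊔ b ∈ I) ∧ s = I ∪ (fun a => aᶜ) '' I

/-- The subalgebra of a Boolean algebra generated by a set. -/
def baGen (s : Set β) : Set β := ⋂₀ {t : Set β | IsBASub t ∧ s ⊆ t}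

/-- An atom of the lattice `Sub(B)` of subalgebras of a Boolean algebra: a subalgebra
that is minimal among subalgebras distinct from the least subalgebra `{⊥, ⊤}`. -/
def IsBAAtomSub (y : Set β) : Prop :=
  IsBASub y ∧ y ≠ {⊥, ⊤} ∧ ∀ z : Set β, IsBASub z → z ≠ {⊥, ⊤} → z ⊆ y → z = y

private lemma eq_of_parts (a u v : β) (h1 : u ⊓ a = v ⊓ a) (h2 : u ⊓ aᶜ = v ⊓ aᶜ) : u = v := by
  have : u ⊓ (a ⊔ aᶜ) = v ⊓ (a ⊔ aᶜ) := by rw [inf_sup_left, inf_sup_left, h1, h2]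
  simpa using this

private lemma key1 (a p q : β) : ((p ⊓ a) ⊔ (q ⊓ aᶜ)) ⊓ a = p ⊓ a := by
  rw [inf_sup_right, inf_assoc, inf_assoc]; simp

private lemma key2 (a p q : β) : ((p ⊓ a) ⊔ (q ⊓ aᶜ)) ⊓ aᶜ = q ⊓ aᶜ := by
  rw [inf_sup_right, inf_assoc, inf_assoc]; simp

private lemma inf_form (a p q r s : β) :
    ((p ⊓ a) ⊔ (q ⊓ aᶜ)) ⊓ ((r ⊓ a) ⊔ (s ⊓ aᶜ)) = ((p ⊓ r) ⊓ a) ⊔ ((q ⊓ s) ⊓ aᶜ) := by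
  apply eq_of_parts a
  · calc ((p ⊓ a) ⊔ (q ⊓ aᶜ)) ⊓ ((r ⊓ a) ⊔ (s ⊓ aᶜ)) ⊓ a
        = ((p ⊓ a) ⊔ (q ⊓ aᶜ)) ⊓ (((r ⊓ a) ⊔ (s ⊓ aᶜ)) ⊓ a) := inf_assoc _ _ _
      _ = ((p ⊓ a) ⊔ (q ⊓ aᶜ)) ⊓ (r ⊓ a) := by rw [key1]
      _ = (((p ⊓ a) ⊔ (q ⊓ aᶜ)) ⊓ a) ⊓ r := by ac_rfl
      _ = (p ⊓ a) ⊓ r := by rw [key1]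
      _ = ((p ⊓ r) ⊓ a) := by ac_rfl
      _ = (((p ⊓ r) ⊓ a) ⊔ ((q ⊓ s) ⊓ aᶜ)) ⊓ a := (key1 a (p ⊓ r) (q ⊓ s)).symm
  · calc ((p ⊓ a) ⊔ (q ⊓ aᶜ)) ⊓ ((r ⊓ a) ⊔ (s ⊓ aᶜ)) ⊓ aᶜ
        = ((p ⊓ a) ⊔ (q ⊓ aᶜ)) ⊓ (((r ⊓ a) ⊔ (s ⊓ aᶜ)) ⊓ aᶜ) := inf_assoc _ _ _
      _ = ((p ⊓ a) ⊔ (q ⊓ aᶜ)) ⊓ (s ⊓ aᶜ) := by rw [key2]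
      _ = (((p ⊓ a) ⊔ (q ⊓ aᶜ)) ⊓ aᶜ) ⊓ s := by ac_rfl
      _ = (q ⊓ aᶜ) ⊓ s := by rw [key2]
      _ = ((q ⊓ s) ⊓ aᶜ) := by ac_rfl
      _ = (((p ⊓ r) ⊓ a) ⊔ ((q ⊓ s) ⊓ aᶜ)) ⊓ aᶜ := (key2 a (p ⊓ r) (q ⊓ s)).symm

private lemma sup_form (a p q r s : β) :
    ((p ⊓ a) ⊔ (q ⊓ aᶜ)) ⊔ ((r ⊓ a) ⊔ (s ⊓ aᶜ)) = ((p ⊔ r) ⊓ a) ⊔ ((q ⊔ s) ⊓ aᶜ) := by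
  rw [inf_sup_right, inf_sup_right]
  ac_rfl

private lemma compl_form (a p q : β) :
    ((p ⊓ a) ⊔ (q ⊓ aᶜ))ᶜ = (pᶜ ⊓ a) ⊔ (qᶜ ⊓ aᶜ) := by
  apply compl_unique
  · rw [inf_form]; simp
  · rw [sup_form]; simp

private lemma agree (a b d : β) (h1 : a ⊓ bᶜ ≤ d) (h2 : b ⊓ aᶜ ≤ d) :
    a = (a ⊓ d) ⊔ (b ⊓ dᶜ) := by
  have hab : a ⊓ dᶜ ≤ b := by
    rw [← sdiff_eq_bot_iff, sdiff_eq, ← le_bot_iff]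
    calc a ⊓ dᶜ ⊓ bᶜ ≤ (a ⊓ bᶜ) ⊓ dᶜ := by
          rw [inf_assoc, inf_assoc]; exact inf_le_inf_left a (by rw [inf_comm])
      _ ≤ d ⊓ dᶜ := inf_le_inf_right _ h1
      _ = ⊥ := by simp
  have hba : b ⊓ dᶜ ≤ a := by
    rw [← sdiff_eq_bot_iff, sdiff_eq, ← le_bot_iff]
    calc b ⊓ dᶜ ⊓ aᶜ ≤ (b ⊓ aᶜ) ⊓ dᶜ := by
          rw [inf_assoc, inf_assoc]; exact inf_le_inf_left b (by rw [inf_comm])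
      _ ≤ d ⊓ dᶜ := inf_le_inf_right _ h2
      _ = ⊥ := by simp
  apply le_antisymm
  · calc a = (a ⊓ d) ⊔ (a ⊓ dᶜ) := by rw [← inf_sup_left]; simp
      _ ≤ (a ⊓ d) ⊔ (b ⊓ dᶜ) := sup_le_sup_left (le_inf hab inf_le_right) _
  · exact sup_le inf_le_left hba


private lemma baGen_isSub (s : Set β) : IsBASub (baGen s) := by
  constructor
  · exact fun t ht => ht.1.1
  constructor
  · exact fun t ht => ht.1.2.1
  constructor
  · exact fun u hu v hv t ht => ht.1.2.2.1 u (hu t ht) v (hv t ht)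
  constructor
  · exact fun u hu v hv t ht => ht.1.2.2.2.1 u (hu t ht) v (hv t ht)
  · exact fun u hu t ht => ht.1.2.2.2.2 u (hu t ht)

private lemma subset_baGen (s : Set β) : s ⊆ baGen s :=
  fun u hu t ht => ht.2 hu

private lemma baGen_le {s t : Set β} (ht : IsBASub t) (hst : s ⊆ t) : baGen s ⊆ t :=
  Set.sInter_subset_of_mem ⟨ht, hst⟩

/-- The main one-directional lemma. -/
private lemma main_dir {x : Set β} (hx : ∃ I : Set β, I.Nonempty ∧ (∀ a ∈ I, ∀ b, b ≤ a → b ∈ I) ∧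
    (∀ a ∈ I, ∀ b ∈ I, a ⊔ b ∈ I) ∧ x = I ∪ (fun a => aᶜ) '' I)
    (a b : β) (hb : b ∉ x) (h : b ∈ baGen (x ∪ {a})) : a ∈ baGen (x ∪ {b}) := by
  obtain ⟨I, ⟨i0, hi0⟩, hdown, hjoin, hxeq⟩ := hx
  -- basic facts about x
  have hIx : I ⊆ x := hxeq ▸ Set.subset_union_left
  have hcx : ∀ d ∈ I, dᶜ ∈ x := fun d hd => hxeq ▸ Set.mem_union_right _ ⟨d, hd, rfl⟩
  have hmem : ∀ p ∈ x, p ∈ I ∨ pᶜ ∈ I := by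
    intro p hp
    rw [hxeq] at hp
    rcases hp with hp | ⟨r, hr, hrp⟩
    · exact Or.inl hp
    · right; rw [← hrp]; simpa using hr
  have hbot : (⊥ : β) ∈ I := hdown i0 hi0 ⊥ bot_le
  -- x is a subalgebra
  have hxsub : IsBASub x := by
    refine ⟨hIx hbot, by simpa using hcx ⊥ hbot, ?_, ?_, ?_⟩
    · intro u hu v hv
      rcases hmem u hu with hu' | hu'
      · exact hIx (hdown u hu' _ inf_le_left)
      · rcases hmem v hv with hv' | hv'
        · exact hIx (hdown v hv' _ inf_le_right)
        · have : (u ⊓ v)ᶜ ∈ I := by rw [compl_inf]; exact hjoin _ hu' _ hv'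
          simpa using hcx _ this
    · intro u hu v hv
      rcases hmem u hu with hu' | hu'
      · rcases hmem v hv with hv' | hv'
        · exact hIx (hjoin _ hu' _ hv')
        · have : (u ⊔ v)ᶜ ∈ I := by
            rw [compl_sup]; exact hdown _ hv' _ inf_le_right
          simpa using hcx _ this
      · have : (u ⊔ v)ᶜ ∈ I := by
          rw [compl_sup]; exact hdown _ hu' _ inf_le_left
        simpa using hcx _ this
    · intro u hu
      rcases hmem u hu with hu' | hu'
      · exact hcx _ hu'
      · simpa using hIx hu'
  -- the normal-form subalgebra
  set S : Set β := {e | ∃ p ∈ x, ∃ q ∈ x, e = (p ⊓ a) ⊔ (q ⊓ aᶜ)} with hS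
  have hSsub : IsBASub S := by
    refine ⟨⟨⊥, hxsub.1, ⊥, hxsub.1, by simp⟩, ⟨⊤, hxsub.2.1, ⊤, hxsub.2.1, by simp⟩, ?_, ?_, ?_⟩
    · rintro u ⟨p, hp, q, hq, rfl⟩ v ⟨r, hr, s, hs, rfl⟩
      exact ⟨p ⊓ r, hxsub.2.2.1 p hp r hr, q ⊓ s, hxsub.2.2.1 q hq s hs, inf_form a p q r s⟩
    · rintro u ⟨p, hp, q, hq, rfl⟩ v ⟨r, hr, s, hs, rfl⟩
      exact ⟨p ⊔ r, hxsub.2.2.2.1 p hp r hr, q ⊔ s, hxsub.2.2.2.1 q hq s hs, sup_form a p q r s⟩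
    · rintro u ⟨p, hp, q, hq, rfl⟩
      exact ⟨pᶜ, hxsub.2.2.2.2 p hp, qᶜ, hxsub.2.2.2.2 q hq, compl_form a p q⟩
  have hxaS : x ∪ {a} ⊆ S := by
    rintro u (hu | hu)
    · exact ⟨u, hu, u, hu, by rw [← inf_sup_left]; simp⟩
    · rcases hu with rfl
      exact ⟨⊤, hxsub.2.1, ⊥, hxsub.1, by simp⟩
  obtain ⟨p, hp, q, hq, hbeq⟩ := baGen_le hSsub hxaS h
  -- generated algebra facts for x ∪ {b}
  have hGsub := baGen_isSub (x ∪ {b} : Set β)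
  have hxG : x ⊆ baGen (x ∪ {b}) := fun u hu => subset_baGen _ (Set.mem_union_left _ hu)
  have hbG : b ∈ baGen (x ∪ {b}) := subset_baGen _ (Set.mem_union_right _ rfl)
  -- case analysis
  rcases hmem p hp with hpI | hpcI
  · rcases hmem q hq with hqI | hqcI
    · -- p, q ∈ I : contradiction with b ∉ x
      have hle : b ≤ p ⊔ q := by
        rw [hbeq]
        exact sup_le (inf_le_left.trans le_sup_left) (inf_le_left.trans le_sup_right)
      exact absurd (hIx (hdown (p ⊔ q) (hjoin p hpI q hqI) b hle)) hb
    · -- p ∈ I, qᶜ ∈ I : use bᶜ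
      set d := p ⊔ qᶜ with hd
      have hdI : d ∈ I := hjoin p hpI qᶜ hqcI
      have h1 : a ⊓ (bᶜ)ᶜ ≤ d := by
        rw [compl_compl, hbeq, inf_comm, key1]
        exact inf_le_left.trans le_sup_left
      have h2 : bᶜ ⊓ aᶜ ≤ d := by
        rw [hbeq, compl_form, key2]
        exact inf_le_left.trans le_sup_right
      have haeq := agree a bᶜ d h1 h2
      rw [haeq]
      refine hGsub.2.2.2.1 _ (hxG (hIx (hdown d hdI _ inf_le_right))) _
        (hGsub.2.2.1 _ (hGsub.2.2.2.2 b hbG) _ (hxG (hcx d hdI)))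
  · rcases hmem q hq with hqI | hqcI
    · -- pᶜ ∈ I, q ∈ I : use b
      set d := pᶜ ⊔ q with hd
      have hdI : d ∈ I := hjoin pᶜ hpcI q hqI
      have h1 : a ⊓ bᶜ ≤ d := by
        rw [hbeq, compl_form, inf_comm, key1]
        exact inf_le_left.trans le_sup_left
      have h2 : b ⊓ aᶜ ≤ d := by
        rw [hbeq, key2]
        exact inf_le_left.trans le_sup_right
      have haeq := agree a b d h1 h2
      rw [haeq]
      exact hGsub.2.2.2.1 _ (hxG (hIx (hdown d hdI _ inf_le_right))) _
        (hGsub.2.2.1 _ hbG _ (hxG (hcx d hdI)))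
    · -- pᶜ, qᶜ ∈ I : b ∈ x, contradiction
      have : bᶜ ∈ I := by
        have hle : (pᶜ ⊓ a) ⊔ (qᶜ ⊓ aᶜ) ≤ pᶜ ⊔ qᶜ :=
          sup_le (inf_le_left.trans le_sup_left) (inf_le_left.trans le_sup_right)
        rw [hbeq, compl_form]
        exact hdown (pᶜ ⊔ qᶜ) (hjoin pᶜ hpcI qᶜ hqcI) _ hle
      exact absurd (by simpa using hcx _ this) hb

/-- If `x` is a dual subalgebra of a Boolean algebra `B` and `a, b ∉ x`, then `b` lies
in the subalgebra generated by `x ∪ {a}` iff `a` lies in the subalgebra generated by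
`x ∪ {b}`. -/
theorem stmt_8 (hnt : (⊥ : β) ≠ ⊤) (x : Set β) (hx : IsDualSub x)
    (a b : β) (ha : a ∉ x) (hb : b ∉ x) :
    b ∈ baGen (x ∪ {a}) ↔ a ∈ baGen (x ∪ {b}) :=
  ⟨fun h => main_dir hx a b hb h, fun h => main_dir hx b a ha h⟩
end

section
/- Let B be a (nontrivial) Boolean algebra and x a dual subalgebra of B. Then x is a principal dual subalgebra if and only if one of the following holds: (1) x is the least element {0,1} of Sub(B); (2) x = B; (3) x is an atom of Sub(B); (4) there exists a dual subalgebra y of B such that x ∩ y is an atom of Sub(B) that is not a dual subalgebra. -/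
variable {β : Type*} [BooleanAlgebra β]

/-- A principal dual subalgebra: `[⊥, a] ∪ [aᶜ, ⊤]` for some `a`. -/
def IsPDSub (x : Set β) : Prop :=
  ∃ a : β, x = {b : β | b ≤ a} ∪ {b : β | aᶜ ≤ b}

/-! ### Auxiliary lemmas -/

lemma le_compl_self_eq_bot {e : β} (h : e ≤ eᶜ) : e = ⊥ := by
  have : e = e ⊓ eᶜ := (inf_eq_left.mpr h).symm
  simpa using this

lemma four_comm (e : β) : ({⊥, e, eᶜ, ⊤} : Set β) = ({⊥, eᶜ, eᶜᶜ, ⊤} : Set β) := by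
  rw [compl_compl]
  ext b
  simp only [Set.mem_insert_iff, Set.mem_singleton_iff]
  tauto

/-- The four-element set `{⊥, e, eᶜ, ⊤}` is a subalgebra. -/
lemma fourSub (e : β) : IsBASub ({⊥, e, eᶜ, ⊤} : Set β) := by
  refine ⟨by simp, by simp, ?_, ?_, ?_⟩
  · rintro a (rfl|rfl|rfl|rfl) b (rfl|rfl|rfl|rfl) <;> simp [Set.mem_insert_iff]
  · rintro a (rfl|rfl|rfl|rfl) b (rfl|rfl|rfl|rfl) <;> simp [Set.mem_insert_iff]
  · rintro a (rfl|rfl|rfl|rfl) <;> simp [Set.mem_insert_iff]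

lemma atomOf {e : β} (he1 : e ≠ ⊥) (he2 : e ≠ ⊤)
    (h : ∀ b ≤ e, b = ⊥ ∨ b = e ∨ b = eᶜ ∨ b = ⊤) : IsAtom e := by
  refine ⟨he1, fun b hb => ?_⟩
  rcases h b hb.le with rfl | rfl | rfl | rfl
  · rfl
  · exact absurd rfl hb.ne
  · exfalso
    have hc : eᶜ = ⊥ := le_compl_self_eq_bot (by rw [compl_compl]; exact hb.le)
    exact he2 (by rw [← compl_compl e, hc, compl_bot])
  · exact absurd hb (by simp)

/-- If `{⊥,e,eᶜ,⊤}` with `e ∉ {⊥,⊤}` is a dual subalgebra, then `e` or `eᶜ` is an atom. -/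
lemma four_dual_atom {e : β} (he1 : e ≠ ⊥) (he2 : e ≠ ⊤)
    (h : IsDualSub ({⊥, e, eᶜ, ⊤} : Set β)) : IsAtom e ∨ IsAtom eᶜ := by
  obtain ⟨I, -, hdown, -, heq⟩ := h
  have hIsub : I ⊆ ({⊥, e, eᶜ, ⊤} : Set β) := heq ▸ Set.subset_union_left
  have he : e ∈ ({⊥, e, eᶜ, ⊤} : Set β) := by simp
  rw [heq] at he
  rcases he with heI | ⟨c, hcI, hc⟩
  · left
    refine atomOf he1 he2 fun b hb => ?_
    simpa [Set.mem_insert_iff] using hIsub (hdown e heI b hb)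
  · right
    have hcI' : eᶜ ∈ I := by
      have hc' : cᶜ = e := hc
      have : c = eᶜ := by rw [← compl_compl c, hc']
      exact this ▸ hcI
    refine atomOf (by simpa using he2) (by simpa using he1) fun b hb => ?_
    have := hIsub (hdown eᶜ hcI' b hb)
    simp only [Set.mem_insert_iff, Set.mem_singleton_iff, compl_compl] at this ⊢
    tauto

/-- If `e` is an atom then the principal dual subalgebra at `e` is `{⊥,e,eᶜ,⊤}`. -/
lemma pd_atom {e : β} (he : IsAtom e) :
    ({b : β | b ≤ e} ∪ {b : β | eᶜ ≤ b}) = ({⊥, e, eᶜ, ⊤} : Set β) := by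
  ext b
  have h1 : b ≤ e ↔ b = ⊥ ∨ b = e := he.le_iff
  have h2 : eᶜ ≤ b ↔ b = eᶜ ∨ b = ⊤ := by
    rw [compl_le_iff_compl_le, he.le_iff]
    constructor
    · rintro (h | h)
      · right; rw [← compl_compl b, h, compl_bot]
      · left; rw [← compl_compl b, h]
    · rintro (rfl | rfl) <;> simp
  simp only [Set.mem_union, Set.mem_setOf_eq, Set.mem_insert_iff, Set.mem_singleton_iff, h1, h2]
  tauto

/-- `{⊥,e,eᶜ,⊤}` is dual if `e` or `eᶜ` is an atom. -/
lemma four_atom_dual {e : β} (h : IsAtom e ∨ IsAtom eᶜ) :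
    IsDualSub ({⊥, e, eᶜ, ⊤} : Set β) := by
  rcases h with h | h
  · refine ⟨{⊥, e}, ⟨⊥, by simp⟩, ?_, ?_, ?_⟩
    · rintro a (rfl|rfl) b hb
      · simp [le_bot_iff.mp hb]
      · rcases h.le_iff.mp hb with rfl | rfl <;> simp
    · rintro a (rfl|rfl) b (rfl|rfl) <;> simp
    · have himg : (fun a : β => aᶜ) '' {⊥, e} = {⊤, eᶜ} := by
        simp [Set.image_insert_eq]
      rw [himg]
      ext b
      simp only [Set.mem_union, Set.mem_insert_iff, Set.mem_singleton_iff]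
      try tauto
  · refine ⟨{⊥, eᶜ}, ⟨⊥, by simp⟩, ?_, ?_, ?_⟩
    · rintro a (rfl|rfl) b hb
      · simp [le_bot_iff.mp hb]
      · rcases h.le_iff.mp hb with rfl | rfl <;> simp
    · rintro a (rfl|rfl) b (rfl|rfl) <;> simp
    · have himg : (fun a : β => aᶜ) '' {⊥, eᶜ} = {⊤, e} := by
        simp [Set.image_insert_eq]
      rw [himg]
      ext b
      simp only [Set.mem_union, Set.mem_insert_iff, Set.mem_singleton_iff]
      try tauto

/-- `{⊥,e,eᶜ,⊤}` with `e ∉ {⊥,⊤}` is an atom of `Sub(B)`. -/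
lemma four_isAtomSub {e : β} (he1 : e ≠ ⊥) (he2 : e ≠ ⊤) :
    IsBAAtomSub ({⊥, e, eᶜ, ⊤} : Set β) := by
  refine ⟨fourSub e, ?_, ?_⟩
  · intro h
    have : e ∈ ({⊥, ⊤} : Set β) := h ▸ (by simp : e ∈ ({⊥, e, eᶜ, ⊤} : Set β))
    rcases this with h | h
    · exact he1 h
    · exact he2 h
  · intro z hz hzne hzsub
    obtain ⟨c, hcz, hcne⟩ : ∃ c ∈ z, c ∉ ({⊥, ⊤} : Set β) := by
      by_contra h
      push_neg at h
      exact hzne (Set.Subset.antisymm h (by rintro b (rfl|rfl); exacts [hz.1, hz.2.1]))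
    have hce : c = e ∨ c = eᶜ := by
      have := hzsub hcz
      simp only [Set.mem_insert_iff, Set.mem_singleton_iff] at this hcne
      push_neg at hcne
      try tauto
    have hez : e ∈ z ∧ eᶜ ∈ z := by
      rcases hce with rfl | rfl
      · exact ⟨hcz, hz.2.2.2.2 c hcz⟩
      · exact ⟨by simpa using hz.2.2.2.2 _ hcz, hcz⟩
    apply Set.Subset.antisymm hzsub
    rintro b (rfl|rfl|rfl|rfl)
    exacts [hz.1, hez.1, hez.2, hz.2.1]

/-- Every atom of `Sub(B)` has the form `{⊥,e,eᶜ,⊤}`. -/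
lemma atomSub_structure {w : Set β} (hw : IsBAAtomSub w) :
    ∃ e : β, e ≠ ⊥ ∧ e ≠ ⊤ ∧ w = ({⊥, e, eᶜ, ⊤} : Set β) := by
  obtain ⟨hsub, hne, hmin⟩ := hw
  obtain ⟨e, hew, hene⟩ : ∃ e ∈ w, e ∉ ({⊥, ⊤} : Set β) := by
    by_contra h
    push_neg at h
    exact hne (Set.Subset.antisymm h (by rintro b (rfl|rfl); exacts [hsub.1, hsub.2.1]))
  simp only [Set.mem_insert_iff, Set.mem_singleton_iff] at hene
  push_neg at hene
  refine ⟨e, hene.1, hene.2, ?_⟩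
  have hz : ({⊥, e, eᶜ, ⊤} : Set β) ⊆ w := by
    rintro b (rfl|rfl|rfl|rfl)
    exacts [hsub.1, hew, hsub.2.2.2.2 e hew, hsub.2.1]
  refine (hmin _ (fourSub e) ?_ hz).symm
  intro h
  have : e ∈ ({⊥, ⊤} : Set β) := h ▸ (by simp : e ∈ ({⊥, e, eᶜ, ⊤} : Set β))
  rcases this with h | h
  · exact hene.1 h
  · exact hene.2 h

/-- The principal dual subalgebra at `c` is a dual subalgebra. -/
lemma pd_isDual (c : β) : IsDualSub ({b : β | b ≤ c} ∪ {b : β | cᶜ ≤ b}) := by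
  refine ⟨{b : β | b ≤ c}, ⟨⊥, bot_le⟩, fun a ha b hb => le_trans hb ha,
    fun a ha b hb => sup_le ha hb, ?_⟩
  have himg : (fun a : β => aᶜ) '' {b : β | b ≤ c} = {b : β | cᶜ ≤ b} := by
    ext b
    simp only [Set.mem_image, Set.mem_setOf_eq]
    constructor
    · rintro ⟨d, hd, rfl⟩
      exact compl_le_compl hd
    · intro h
      exact ⟨bᶜ, by rwa [compl_le_iff_compl_le] at h, compl_compl b⟩
  rw [himg]

/-- Key lemma for the backward direction, disjunct (4). -/
lemma key_lemma {x y : Set β} {I J : Set β}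
    (hIdown : ∀ a ∈ I, ∀ b, b ≤ a → b ∈ I) (hIjoin : ∀ a ∈ I, ∀ b ∈ I, a ⊔ b ∈ I)
    (hxeq : x = I ∪ (fun a => aᶜ) '' I)
    (hJdown : ∀ a ∈ J, ∀ b, b ≤ a → b ∈ J)
    (hyeq : y = J ∪ (fun a => aᶜ) '' J)
    {e : β} (he1 : e ≠ ⊥) (hxy : x ∩ y = ({⊥, e, eᶜ, ⊤} : Set β))
    (heI : e ∈ I) (heJ : eᶜ ∈ J) : IsPDSub x := by
  by_cases htop : ⊤ ∈ I
  · refine ⟨⊤, ?_⟩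
    have hxu : x = Set.univ := by
      apply Set.eq_univ_of_forall
      intro b
      rw [hxeq]
      exact Or.inl (hIdown ⊤ htop b le_top)
    rw [hxu]
    ext b; simp
  · refine ⟨e, ?_⟩
    ext b
    simp only [Set.mem_union, Set.mem_setOf_eq]
    constructor
    · intro hb
      rw [hxeq] at hb
      rcases hb with hbI | ⟨c, hcI, rfl⟩
      · -- b ∈ I : consider b ⊔ e
        have hd : b ⊔ e ∈ x ∩ y := by
          constructor
          · rw [hxeq]; exact Or.inl (hIjoin b hbI e heI)
          · rw [hyeq]
            refine Or.inr ⟨(b ⊔ e)ᶜ, hJdown eᶜ heJ _ (by simp), by simp⟩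
        rw [hxy] at hd
        rcases hd with hd | hd | hd | hd
        · exact absurd (le_bot_iff.mp (hd ▸ le_sup_right : e ≤ ⊥)) he1
        · exact Or.inl (le_sup_left.trans hd.le)
        · exact absurd (le_compl_self_eq_bot (hd ▸ le_sup_right : e ≤ eᶜ)) he1
        · exact absurd (hd ▸ hIjoin b hbI e heI) htop
      · -- b = cᶜ with c ∈ I : consider c ⊔ e
        have hd : c ⊔ e ∈ x ∩ y := by
          constructor
          · rw [hxeq]; exact Or.inl (hIjoin c hcI e heI)
          · rw [hyeq]
            refine Or.inr ⟨(c ⊔ e)ᶜ, hJdown eᶜ heJ _ (by simp), by simp⟩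
        rw [hxy] at hd
        rcases hd with hd | hd | hd | hd
        · exact absurd (le_bot_iff.mp (hd ▸ le_sup_right : e ≤ ⊥)) he1
        · exact Or.inr (compl_le_compl (le_sup_left.trans hd.le))
        · exact absurd (le_compl_self_eq_bot (hd ▸ le_sup_right : e ≤ eᶜ)) he1
        · exact absurd (hd ▸ hIjoin c hcI e heI) htop
    · rintro (hb | hb)
      · rw [hxeq]; exact Or.inl (hIdown e heI b hb)
      · rw [hxeq]
        exact Or.inr ⟨bᶜ, hIdown e heI bᶜ (by rwa [compl_le_iff_compl_le] at hb),
          compl_compl b⟩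

/-- A dual subalgebra `x` of a Boolean algebra `B` is principal iff `x = {⊥, ⊤}` (the
least subalgebra), or `x = B`, or `x` is an atom of `Sub(B)`, or there is a dual
subalgebra `y` such that `x ∩ y` is an atom of `Sub(B)` that is not a dual
subalgebra. -/
theorem stmt_10 (hnt : (⊥ : β) ≠ ⊤) (x : Set β) (hx : IsDualSub x) :
    IsPDSub x ↔
      (x = {⊥, ⊤} ∨ x = Set.univ ∨ IsBAAtomSub x ∨
        ∃ y : Set β, IsDualSub y ∧ IsBAAtomSub (x ∩ y) ∧ ¬ IsDualSub (x ∩ y)) := by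
  constructor
  · rintro ⟨a, rfl⟩
    by_cases ha0 : a = ⊥
    · subst ha0
      left
      ext b
      simp only [Set.mem_union, Set.mem_setOf_eq, le_bot_iff, compl_bot, top_le_iff,
        Set.mem_insert_iff, Set.mem_singleton_iff]
      try tauto
    by_cases ha1 : a = ⊤
    · subst ha1
      right; left
      ext b; simp
    by_cases haa : IsAtom a
    · right; right; left
      rw [pd_atom haa]
      exact four_isAtomSub ha0 ha1
    by_cases hac : IsAtom aᶜ
    · -- a is a coatom, so the principal dual subalgebra is everything
      right; left
      apply Set.eq_univ_of_forall
      intro b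
      rcases hac.le_iff.mp (inf_le_left : aᶜ ⊓ b ≤ aᶜ) with h | h
      · left
        have hb : b ⊓ aᶜ = ⊥ := by rwa [inf_comm] at h
        calc b = b ⊓ (a ⊔ aᶜ) := by simp
        _ = b ⊓ a ⊔ b ⊓ aᶜ := inf_sup_left b a aᶜ
        _ = b ⊓ a := by rw [hb, sup_bot_eq]
        _ ≤ a := inf_le_right
      · right
        exact h ▸ (inf_le_right : aᶜ ⊓ b ≤ b)
    · -- general case: use y = [⊥, aᶜ] ∪ [a, ⊤]
      right; right; right
      refine ⟨{b : β | b ≤ aᶜ} ∪ {b : β | aᶜᶜ ≤ b}, pd_isDual aᶜ, ?_⟩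
      have hxy : ({b : β | b ≤ a} ∪ {b : β | aᶜ ≤ b}) ∩
          ({b : β | b ≤ aᶜ} ∪ {b : β | aᶜᶜ ≤ b}) = ({⊥, a, aᶜ, ⊤} : Set β) := by
        ext b
        simp only [Set.mem_inter_iff, Set.mem_union, Set.mem_setOf_eq, compl_compl,
          Set.mem_insert_iff, Set.mem_singleton_iff]
        constructor
        · rintro ⟨h1 | h1, h2 | h2⟩
          · exact Or.inl (le_bot_iff.mp (le_inf h1 h2 |>.trans (by simp)))
          · exact Or.inr (Or.inl (le_antisymm h1 h2))
          · exact Or.inr (Or.inr (Or.inl (le_antisymm h2 h1)))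
          · refine Or.inr (Or.inr (Or.inr (top_le_iff.mp ?_)))
            calc ⊤ = a ⊔ aᶜ := by simp
            _ ≤ b := sup_le h2 h1
        · rintro (rfl | rfl | rfl | rfl)
          · exact ⟨Or.inl bot_le, Or.inl bot_le⟩
          · exact ⟨Or.inl le_rfl, Or.inr le_rfl⟩
          · exact ⟨Or.inr le_rfl, Or.inl le_rfl⟩
          · exact ⟨Or.inr le_top, Or.inr le_top⟩
      rw [hxy]
      refine ⟨four_isAtomSub ha0 ha1, fun hdual => ?_⟩
      rcases four_dual_atom ha0 ha1 hdual with h | h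
      · exact haa h
      · exact hac h
  · rintro (h1 | h2 | h3 | ⟨y, hy, hatom, hnd⟩)
    · refine ⟨⊥, ?_⟩
      rw [h1]
      ext b
      simp only [Set.mem_union, Set.mem_setOf_eq, le_bot_iff, compl_bot, top_le_iff,
        Set.mem_insert_iff, Set.mem_singleton_iff]
      try tauto
    · refine ⟨⊤, ?_⟩
      rw [h2]
      ext b; simp
    · obtain ⟨e, he1, he2, rfl⟩ := atomSub_structure h3
      rcases four_dual_atom he1 he2 hx with h | h
      · exact ⟨e, (pd_atom h).symm⟩
      · refine ⟨eᶜ, ?_⟩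
        rw [pd_atom h, ← four_comm]
    · obtain ⟨e, he1, he2, hset⟩ := atomSub_structure hatom
      obtain ⟨I, -, hIdown, hIjoin, hxeq⟩ := hx
      obtain ⟨J, -, hJdown, hJjoin, hyeq⟩ := hy
      have hexy : e ∈ x ∩ y := by rw [hset]; simp
      have heI : e ∈ I ∨ eᶜ ∈ I := by
        have := hexy.1
        rw [hxeq] at this
        rcases this with h | ⟨c, hc, hce⟩
        · exact Or.inl h
        · right
          have hce' : cᶜ = e := hce
          have : c = eᶜ := by rw [← compl_compl c, hce']
          exact this ▸ hc
      have heJ : e ∈ J ∨ eᶜ ∈ J := by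
        have := hexy.2
        rw [hyeq] at this
        rcases this with h | ⟨c, hc, hce⟩
        · exact Or.inl h
        · right
          have hce' : cᶜ = e := hce
          have : c = eᶜ := by rw [← compl_compl c, hce']
          exact this ▸ hc
      rcases heI with heI | heI <;> rcases heJ with heJ | heJ
      · -- e ∈ I and e ∈ J : then e is an atom, so x ∩ y is dual, contradiction
        exfalso
        apply hnd
        rw [hset]
        refine four_atom_dual (Or.inl (atomOf he1 he2 fun b hb => ?_))
        have hb' : b ∈ x ∩ y := by
          constructor
          · rw [hxeq]; exact Or.inl (hIdown e heI b hb)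
          · rw [hyeq]; exact Or.inl (hJdown e heJ b hb)
        rw [hset] at hb'
        simpa [Set.mem_insert_iff] using hb'
      · exact key_lemma hIdown hIjoin hxeq hJdown hyeq he1 hset heI heJ
      · -- eᶜ ∈ I and e ∈ J : apply key lemma with eᶜ
        refine key_lemma hIdown hIjoin hxeq hJdown hyeq (e := eᶜ)
          (by simpa using he2) ?_ heI (by simpa using heJ)
        rw [hset, four_comm]
      · -- eᶜ ∈ I and eᶜ ∈ J : then eᶜ is an atom, so x ∩ y is dual, contradiction
        exfalso
        apply hnd
        rw [hset]
        refine four_atom_dual (Or.inr (atomOf (by simpa using he2) (by simpa using he1)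
          fun b hb => ?_))
        have hb' : b ∈ x ∩ y := by
          constructor
          · rw [hxeq]; exact Or.inl (hIdown eᶜ heI b hb)
          · rw [hyeq]; exact Or.inl (hJdown eᶜ heJ b hb)
        rw [hset] at hb'
        simp only [Set.mem_insert_iff, Set.mem_singleton_iff, compl_compl] at hb' ⊢
        tauto
end

section
/- (Sachs) Let B and C be (nontrivial) Boolean algebras and let φ : Sub(B) → Sub(C) be a lattice isomorphism. Then there is a Boolean algebra isomorphism φ* : B → C such that φ(x) = φ*[x] (the image of x under φ*) for every subalgebra x of B. Moreover, if B does not have exactly four elements, then the isomorphism φ* with this property is unique. -/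
variable {β : Type*} [BooleanAlgebra β]

/-- The lattice `Sub(B)` of subalgebras of a Boolean algebra, ordered by inclusion. -/
abbrev BASub (β : Type*) [BooleanAlgebra β] := {s : Set β // IsBASub s}

/-!
The atoms of `Sub(B)` are the subalgebras `{⊥, ⊤, x, xᶜ}`, so `φ` induces a bijection on the
pairs `{x, xᶜ}`; the point is to choose one element of each pair coherently. Whether two atoms are
compatible (one of `x ⊓ y`, `x ⊓ yᶜ`, `xᶜ ⊓ y`, `xᶜ ⊓ yᶜ` vanishes) is visible in the lattice: at
most three atoms lie below their join. The atoms compatible with `c` fall into two sides, those of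
elements below `c` and those of elements below `cᶜ`, and two of them lie on opposite sides iff
their join lies above an atom incompatible with `c`. Hence `φ` preserves sides: it maps the dual
subalgebras `↓c ∪ ↑cᶜ` and `↓cᶜ ∪ ↑c` onto `↓c' ∪ ↑c'ᶜ` and `↓c'ᶜ ∪ ↑c'` for some `c'`, and
`c ↦ c'` is the required isomorphism. Conversely an isomorphism inducing `φ` must send `c` to such
a `c'`, and `c'` is unique unless `↓c' ∪ ↑c'ᶜ = ↓c'ᶜ ∪ ↑c'`, which forces `C` to have at most four
elements. When `B` has two or four elements, `Sub(B)` has at most two elements and every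
isomorphism induces `φ`.
-/

theorem exists_orderIso_of_rel {α γ : Type*} [PartialOrder α] [PartialOrder γ] (R : α → γ → Prop)
    (hR : ∀ a, ∃ c, R a c) (hR' : ∀ c, ∃ a, R a c)
    (hle : ∀ ⦃a a' c c'⦄, R a c → R a' c' → (a ≤ a' ↔ c ≤ c')) :
    ∃ f : α ≃o γ, ∀ a, R a (f a) := by
  choose f hf using hR
  choose g hg using hR'
  have left_unique {a a' c} (h : R a c) (h' : R a' c) : a = a' :=
    le_antisymm ((hle h h').2 le_rfl) ((hle h' h).2 le_rfl)
  have right_unique {a c c'} (h : R a c) (h' : R a c') : c = c' :=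
    le_antisymm ((hle h h').1 le_rfl) ((hle h' h).1 le_rfl)
  exact ⟨{ toFun := f, invFun := g
           left_inv := fun a => left_unique (hg (f a)) (hf a)
           right_inv := fun c => right_unique (hf (g c)) (hg c)
           map_rel_iff' := (hle (hf _) (hf _)).symm }, hf⟩

namespace BooleanSubalgebra

variable {α : Type*} [BooleanAlgebra α] {L : BooleanSubalgebra α} {a b c w x y : α}

lemma closure_singleton_le_iff : closure {x} ≤ L ↔ x ∈ L := by simp

/-- The dual subalgebra of the principal ideal `↓c`. -/
def principalDual (c : α) : BooleanSubalgebra α where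
  carrier := {w | w ≤ c ∨ cᶜ ≤ w}
  supClosed' := by
    rintro a (ha | ha) b (hb | hb)
    exacts [Or.inl (sup_le ha hb), Or.inr (hb.trans le_sup_right), Or.inr (ha.trans le_sup_left),
      Or.inr (ha.trans le_sup_left)]
  infClosed' := by
    rintro a (ha | ha) b (hb | hb)
    exacts [Or.inl (inf_le_left.trans ha), Or.inl (inf_le_left.trans ha),
      Or.inl (inf_le_right.trans hb), Or.inr (le_inf ha hb)]
  compl_mem' := by
    rintro a (ha | ha)
    exacts [Or.inr (compl_le_compl ha), Or.inl (compl_le_iff_compl_le.1 ha)]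
  bot_mem' := Or.inl bot_le

lemma mem_principalDual : w ∈ principalDual c ↔ w ≤ c ∨ cᶜ ≤ w := Iff.rfl

lemma self_mem_principalDual (c : α) : c ∈ principalDual c := Or.inl le_rfl

lemma principalDual_mono (h : a ≤ b) : principalDual a ≤ principalDual b := by
  rintro w (hw | hw)
  exacts [Or.inl (hw.trans h), Or.inr ((compl_le_compl h).trans hw)]

@[simp] lemma principalDual_bot : principalDual (⊥ : α) = ⊥ := by
  refine BooleanSubalgebra.ext fun w => ?_
  simp [mem_principalDual]

@[simp] lemma principalDual_top : principalDual (⊤ : α) = ⊤ :=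
  eq_top_iff.2 fun _ _ => Or.inl le_top

lemma mem_principalDual_inf_principalDual_compl :
    w ∈ principalDual c ⊓ principalDual cᶜ ↔ w = ⊥ ∨ w = ⊤ ∨ w = c ∨ w = cᶜ := by
  simp only [mem_inf, mem_principalDual, compl_compl]
  constructor
  · rintro ⟨h | h, h' | h'⟩
    · exact Or.inl (le_bot_iff.1 (le_inf h h' |>.trans inf_compl_eq_bot.le))
    · exact Or.inr (Or.inr (Or.inl (le_antisymm h h')))
    · exact Or.inr (Or.inr (Or.inr (le_antisymm h' h)))
    · exact Or.inr (Or.inl (top_le_iff.1 (sup_compl_eq_top.ge.trans (sup_le h' h))))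
  · rintro (rfl | rfl | rfl | rfl) <;> simp

lemma principalDual_inf_principalDual_compl (c : α) :
    principalDual c ⊓ principalDual cᶜ = closure {c} := by
  refine le_antisymm (fun w hw => ?_) ?_
  · rcases mem_principalDual_inf_principalDual_compl.1 hw with rfl | rfl | rfl | rfl
    exacts [bot_mem, top_mem, subset_closure rfl, compl_mem (subset_closure rfl)]
  · rw [closure_singleton_le_iff, mem_principalDual_inf_principalDual_compl]
    exact Or.inr (Or.inr (Or.inl rfl))

lemma mem_closure_singleton : w ∈ closure {c} ↔ w = ⊥ ∨ w = ⊤ ∨ w = c ∨ w = cᶜ := by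
  rw [← principalDual_inf_principalDual_compl, mem_principalDual_inf_principalDual_compl]

lemma closure_singleton_le_principalDual (c : α) : closure {c} ≤ principalDual c :=
  principalDual_inf_principalDual_compl c ▸ inf_le_left

lemma closure_singleton_le_principalDual_compl (c : α) : closure {c} ≤ principalDual cᶜ :=
  principalDual_inf_principalDual_compl c ▸ inf_le_right

lemma principalDual_sup_principalDual_compl (c : α) :
    principalDual c ⊔ principalDual cᶜ = ⊤ := by
  refine eq_top_iff.2 fun w _ => ?_
  have : w = w ⊓ c ⊔ w ⊓ cᶜ := by rw [← inf_sup_left, sup_compl_eq_top, inf_top_eq]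
  rw [this]
  exact sup_mem (le_sup_left (a := principalDual c) (Or.inl inf_le_right))
    (le_sup_right (b := principalDual cᶜ) (Or.inl inf_le_right))

lemma closure_singleton_compl (c : α) : closure {cᶜ} = closure {c} := by
  rw [← principalDual_inf_principalDual_compl, ← principalDual_inf_principalDual_compl, compl_compl,
    inf_comm]

lemma closure_singleton_eq_top_of_principalDual_eq (h : principalDual c = principalDual cᶜ) :
    closure {c} = ⊤ := by
  rw [← principalDual_inf_principalDual_compl, ← principalDual_sup_principalDual_compl c, h,
    inf_idem, sup_idem]

lemma eq_or_eq_compl_of_principalDual_eq (h : principalDual a = principalDual b)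
    (h' : principalDual aᶜ = principalDual bᶜ) : a = b ∨ a = bᶜ := by
  have h₁ : a ∈ principalDual b := h ▸ self_mem_principalDual a
  have h₂ : b ∈ principalDual a := h ▸ self_mem_principalDual b
  have h₃ : aᶜ ∈ principalDual bᶜ := h' ▸ self_mem_principalDual aᶜ
  have h₄ : bᶜ ∈ principalDual aᶜ := h' ▸ self_mem_principalDual bᶜ
  simp only [mem_principalDual, compl_compl, compl_le_compl_iff_le] at h₁ h₂ h₃ h₄
  by_cases hab : a ≤ b
  · by_cases hba : b ≤ a
    · exact Or.inl (le_antisymm hab hba)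
    · exact Or.inr (le_antisymm (le_compl_comm.1 (h₃.resolve_left hba))
        (compl_le_iff_compl_le.1 (h₂.resolve_left hba)))
  · exact Or.inr (le_antisymm (h₄.resolve_left hab) (h₁.resolve_left hab))

lemma closure_singleton_eq_bot_iff : closure {a} = ⊥ ↔ a = ⊥ ∨ a = ⊤ := by
  rw [← le_bot_iff, closure_singleton_le_iff, mem_bot]

@[simp] lemma closure_singleton_bot : closure {(⊥ : α)} = ⊥ :=
  closure_singleton_eq_bot_iff.2 (Or.inl rfl)

lemma exists_mem_ne_bot_ne_top (h : L ≠ ⊥) : ∃ x ∈ L, x ≠ ⊥ ∧ x ≠ ⊤ := by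
  contrapose! h
  exact le_bot_iff.1 fun x hx => (em (x = ⊥)).imp_right (h x hx)

lemma le_closure_singleton_iff : L ≤ closure {a} ↔ L = ⊥ ∨ L = closure {a} := by
  refine ⟨fun h => or_iff_not_imp_left.2 fun hL => le_antisymm h ?_, ?_⟩
  · obtain ⟨x, hxL, hx⟩ := exists_mem_ne_bot_ne_top hL
    rcases mem_closure_singleton.1 (h hxL) with rfl | rfl | rfl | rfl
    · exact (hx.1 rfl).elim
    · exact (hx.2 rfl).elim
    · exact closure_singleton_le_iff.2 hxL
    · rw [← closure_singleton_compl]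
      exact closure_singleton_le_iff.2 hxL
  · rintro (rfl | rfl)
    exacts [bot_le, le_rfl]

lemma isAtom_closure_singleton_iff : IsAtom (closure {a}) ↔ a ≠ ⊥ ∧ a ≠ ⊤ := by
  rw [← not_or, ← closure_singleton_eq_bot_iff]
  refine ⟨IsAtom.ne_bot, fun h => ⟨h, fun L hL => ?_⟩⟩
  exact (le_closure_singleton_iff.1 hL.le).resolve_right hL.ne

lemma closure_singleton_eq_bot_or_isAtom (a : α) : closure {a} = ⊥ ∨ IsAtom (closure {a}) := by
  rw [isAtom_closure_singleton_iff, closure_singleton_eq_bot_iff]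
  tauto

lemma exists_eq_closure_singleton_of_isAtom (h : IsAtom L) : ∃ a, L = closure {a} := by
  obtain ⟨x, hxL, hx⟩ := exists_mem_ne_bot_ne_top h.ne_bot
  exact ⟨x, ((h.le_iff.1 (closure_singleton_le_iff.2 hxL)).resolve_left
    (isAtom_closure_singleton_iff.2 hx).ne_bot).symm⟩

instance : IsAtomistic (BooleanSubalgebra α) := by
  refine (isAtomistic_iff _).2 fun L => ⟨{X | IsAtom X ∧ X ≤ L}, ⟨fun _ hX => hX.2, ?_⟩,
    fun _ hX => hX.1⟩
  intro M hM x hxL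
  by_cases hx : x = ⊥ ∨ x = ⊤
  · rcases hx with rfl | rfl
    exacts [bot_mem, top_mem]
  · rw [not_or] at hx
    exact closure_singleton_le_iff.1
      (hM ⟨isAtom_closure_singleton_iff.2 hx, closure_singleton_le_iff.2 hxL⟩)

lemma closure_singleton_ne_of_disjoint (hx : x ≠ ⊥) (hy : y ≠ ⊥) (hw : w ≠ ⊥)
    (hxy : Disjoint x y) (hxw : Disjoint x w) (hyw : Disjoint y w) :
    closure {x} ≠ closure {y} := by
  intro h
  have : y ∈ closure {x} := h ▸ subset_closure rfl
  rcases mem_closure_singleton.1 this with rfl | rfl | rfl | rfl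
  · exact hy rfl
  · exact hx (disjoint_top.1 hxy)
  · exact hx (disjoint_self.1 hxy)
  · exact hw (le_bot_iff.1 (le_inf hyw.symm.le_compl_right hxw.symm.le_compl_right |>.trans
      (by simp)))

lemma isAtom_closure_singleton_of_disjoint (hx : x ≠ ⊥) (hy : y ≠ ⊥) (h : Disjoint x y) :
    IsAtom (closure {x}) :=
  isAtom_closure_singleton_iff.2 ⟨hx, fun hx' => hy (disjoint_top.1 (hx' ▸ h).symm)⟩

lemma four_le_encard_atoms {M : BooleanSubalgebra α} {p q r s : α} (hp : p ≠ ⊥) (hq : q ≠ ⊥)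
    (hr : r ≠ ⊥) (hs : s ≠ ⊥) (hpq : Disjoint p q) (hpr : Disjoint p r) (hps : Disjoint p s)
    (hqr : Disjoint q r) (hqs : Disjoint q s) (hrs : Disjoint r s) (hpM : p ∈ M) (hqM : q ∈ M)
    (hrM : r ∈ M) (hsM : s ∈ M) : 4 ≤ {T | IsAtom T ∧ T ≤ M}.encard := by
  have hsub : {closure {p}, closure {q}, closure {r}, closure {s}} ⊆ {T | IsAtom T ∧ T ≤ M} := by
    rintro T (rfl | rfl | rfl | rfl)
    · exact ⟨isAtom_closure_singleton_of_disjoint hp hq hpq, closure_singleton_le_iff.2 hpM⟩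
    · exact ⟨isAtom_closure_singleton_of_disjoint hq hp hpq.symm, closure_singleton_le_iff.2 hqM⟩
    · exact ⟨isAtom_closure_singleton_of_disjoint hr hp hpr.symm, closure_singleton_le_iff.2 hrM⟩
    · exact ⟨isAtom_closure_singleton_of_disjoint hs hp hps.symm, closure_singleton_le_iff.2 hsM⟩
  refine le_of_eq_of_le ?_ (Set.encard_le_encard hsub)
  rw [Set.encard_insert_of_notMem, Set.encard_insert_of_notMem, Set.encard_pair]
  · norm_num
  · exact closure_singleton_ne_of_disjoint hr hs hp hrs hpr.symm hps.symm
  · simp only [Set.mem_insert_iff, Set.mem_singleton_iff, not_or]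
    exact ⟨closure_singleton_ne_of_disjoint hq hr hp hqr hpq.symm hpr.symm,
      closure_singleton_ne_of_disjoint hq hs hp hqs hpq.symm hps.symm⟩
  · simp only [Set.mem_insert_iff, Set.mem_singleton_iff, not_or]
    exact ⟨closure_singleton_ne_of_disjoint hp hq hr hpq hpr hqr,
      closure_singleton_ne_of_disjoint hp hr hq hpr hpq hqr.symm,
      closure_singleton_ne_of_disjoint hp hs hq hps hpq hqs.symm⟩

lemma card_eq_four_of_isAtom_top (h : IsAtom (⊤ : BooleanSubalgebra α)) : Nat.card α = 4 := by
  obtain ⟨a, ha⟩ := exists_eq_closure_singleton_of_isAtom h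
  obtain ⟨ha₀, ha₁⟩ := isAtom_closure_singleton_iff.1 (ha ▸ h)
  have huniv : (Set.univ : Set α) = {⊥, ⊤, a, aᶜ} := by
    ext x
    simp [← mem_closure_singleton, ← ha]
  rw [← Set.ncard_univ, huniv, Set.ncard_insert_of_notMem, Set.ncard_insert_of_notMem,
    Set.ncard_pair]
  · exact fun h => ha₀ (le_compl_self.1 h.le)
  · simp only [Set.mem_insert_iff, Set.mem_singleton_iff, not_or]
    exact ⟨Ne.symm ha₁, fun h => ha₀ (compl_eq_top.1 h.symm)⟩
  · simp only [Set.mem_insert_iff, Set.mem_singleton_iff, not_or]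
    exact ⟨fun h => ha₀ (le_bot_iff.1 (h ▸ le_top)), Ne.symm ha₀,
      fun h => ha₁ (compl_eq_bot.1 h.symm)⟩

variable {γ : Type*} [BooleanAlgebra γ]

lemma image_principalDual (f : α ≃o γ) (c : α) :
    f '' principalDual c = principalDual (f c) := by
  ext y
  obtain ⟨x, rfl⟩ := f.surjective y
  simp only [f.injective.mem_set_image, SetLike.mem_coe, mem_principalDual, ← map_compl' f,
    f.le_iff_le]

theorem orderIso_eq_of_image_eq (hγ : ¬IsAtom (⊤ : BooleanSubalgebra γ)) {f g : α ≃o γ}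
    (h : ∀ L : BooleanSubalgebra α, f '' L = g '' L) : f = g := by
  have e (c : α) : principalDual (f c) = principalDual (g c) :=
    SetLike.coe_injective (by rw [← image_principalDual, ← image_principalDual, h])
  ext x
  by_cases hx : x = ⊥ ∨ x = ⊤
  · rcases hx with rfl | rfl <;> simp
  refine (eq_or_eq_compl_of_principalDual_eq (e x) (by rw [← map_compl', ← map_compl', e]))
    |>.resolve_right fun hfg => hγ ?_
  have hgx : IsAtom (closure {g x}) := by
    rw [isAtom_closure_singleton_iff, ← g.map_bot, ← g.map_top, g.injective.ne_iff,
      g.injective.ne_iff, ← not_or]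
    exact hx
  rwa [← closure_singleton_eq_top_of_principalDual_eq (hfg ▸ e x).symm]

end BooleanSubalgebra

namespace Sachs

open BooleanSubalgebra

section Lattice

variable {L M : Type*} [Lattice L] [OrderBot L] [Lattice M] [OrderBot M] {A B Q : L}

/-- In `Sub(B)`, the atoms `closure {x}` and `closure {y}` are compatible iff `x` and `y` generate
at most eight elements. -/
def Compatible (A B : L) : Prop := {T : L | IsAtom T ∧ T ≤ A ⊔ B}.encard ≤ 3

def Separates (Q A B : L) : Prop := ∃ W, IsAtom W ∧ W ≤ A ⊔ B ∧ ¬Compatible W Q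

lemma Compatible.symm (h : Compatible A B) : Compatible B A := by
  rwa [Compatible, sup_comm]

lemma compatible_map_iff (e : L ≃o M) : Compatible (e A) (e B) ↔ Compatible A B := by
  have : {T : M | IsAtom T ∧ T ≤ e A ⊔ e B} = e '' {T | IsAtom T ∧ T ≤ A ⊔ B} := by
    ext T
    simp [e.image_eq_preimage_symm, e.symm.isAtom_iff, e.symm_apply_le, e.map_sup]
  rw [Compatible, Compatible, this, e.injective.encard_image]

lemma separates_map_iff (e : L ≃o M) : Separates (e Q) (e A) (e B) ↔ Separates Q A B := by
  refine ⟨fun ⟨W, hW, hle, hc⟩ => ⟨e.symm W, (e.symm.isAtom_iff W).2 hW, ?_, ?_⟩,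
    fun ⟨W, hW, hle, hc⟩ => ⟨e W, (e.isAtom_iff W).2 hW, ?_, ?_⟩⟩
  · rwa [e.symm_apply_le, e.map_sup]
  · rwa [← compatible_map_iff e, e.apply_symm_apply]
  · rw [← e.map_sup]
    exact e.monotone hle
  · rwa [compatible_map_iff]

end Lattice

section BooleanAlgebra

variable {α : Type*} [BooleanAlgebra α] {c w x y : α}

lemma eq_of_mem_principalDual_inf (hxy : x ≤ y) (hw : w ∈ principalDual xᶜ ⊓ principalDual (y \ x)ᶜ)
    (hwy : w ≤ y) (hw₀ : w ≠ ⊥) : w = x ∨ w = y ∨ w = y \ x := by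
  have hy : x ⊔ y \ x = y := sup_sdiff_cancel_right hxy
  simp only [mem_inf, mem_principalDual, compl_compl] at hw
  rcases hw with ⟨h₁ | h₁, h₂ | h₂⟩
  · have : Disjoint w (x ⊔ y \ x) :=
      disjoint_sup_right.2 ⟨le_compl_iff_disjoint_right.1 h₁, le_compl_iff_disjoint_right.1 h₂⟩
    exact (hw₀ (this.eq_bot_of_le (hwy.trans hy.ge))).elim
  · exact Or.inr (Or.inr (le_antisymm (by rw [sdiff_eq]; exact le_inf hwy h₁) h₂))
  · exact Or.inl (le_antisymm (Disjoint.left_le_of_le_sup_right (hwy.trans hy.ge)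
      (le_compl_iff_disjoint_right.1 h₂)) h₁)
  · exact Or.inr (Or.inl (le_antisymm hwy (hy ▸ sup_le h₁ h₂)))

lemma compatible_closure_singleton_of_le (hxy : x ≤ y) :
    Compatible (closure {x}) (closure {y}) := by
  have hsub : {T | IsAtom T ∧ T ≤ closure {x} ⊔ closure {y}} ⊆
      {closure {x}, closure {y}, closure {y \ x}} := by
    rintro T ⟨hT, hTle⟩
    obtain ⟨w, rfl⟩ := exists_eq_closure_singleton_of_isAtom hT
    have hw : w ∈ principalDual xᶜ ⊓ principalDual (y \ x)ᶜ ⊓ principalDual y := by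
      refine closure_singleton_le_iff.1 (hTle.trans (sup_le ?_ ?_)) <;>
        refine closure_singleton_le_iff.2 (mem_inf.2 ⟨mem_inf.2 ⟨?_, ?_⟩, ?_⟩) <;>
        simp only [mem_principalDual, compl_compl]
      exacts [Or.inr le_rfl, Or.inl (le_compl_iff_disjoint_right.2 disjoint_sdiff_self_right),
        Or.inl hxy, Or.inr hxy, Or.inr sdiff_le, Or.inl le_rfl]
    obtain ⟨v, hvw, hv, hvy⟩ : ∃ v : α, closure {v} = closure {w} ∧
        v ∈ principalDual xᶜ ⊓ principalDual (y \ x)ᶜ ∧ v ≤ y := by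
      rcases hw.2 with h | h
      · exact ⟨w, rfl, hw.1, h⟩
      · exact ⟨wᶜ, closure_singleton_compl w, compl_mem hw.1, compl_le_iff_compl_le.1 h⟩
    have hv₀ : v ≠ ⊥ := (isAtom_closure_singleton_iff.1 (hvw ▸ hT)).1
    rw [← hvw]
    rcases eq_of_mem_principalDual_inf hxy hv hvy hv₀ with rfl | rfl | rfl <;> simp
  refine (Set.encard_le_encard hsub).trans ?_
  grw [Set.encard_insert_le, Set.encard_insert_le, Set.encard_singleton]
  norm_num

lemma not_compatible_closure_singleton (h₁ : ¬x ≤ c) (h₂ : ¬cᶜ ≤ x) (h₃ : ¬x ≤ cᶜ)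
    (h₄ : ¬c ≤ x) : ¬Compatible (closure {x}) (closure {c}) := by
  have hp : x ⊓ c ≠ ⊥ := fun h => h₃ (le_compl_iff_disjoint_right.2 (disjoint_iff.2 h))
  have hq : x ⊓ cᶜ ≠ ⊥ := fun h => h₁ (by
    simpa using le_compl_iff_disjoint_right.2 (disjoint_iff.2 h))
  have hr : xᶜ ⊓ c ≠ ⊥ := fun h => h₄ (by
    simpa using le_compl_iff_disjoint_left.2 (disjoint_iff.2 h))
  have hs : xᶜ ⊓ cᶜ ≠ ⊥ := fun h => h₂ (by
    simpa using le_compl_iff_disjoint_left.2 (disjoint_iff.2 h))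
  have dl {u v u' v' : α} (h : Disjoint u u') : Disjoint (u ⊓ v) (u' ⊓ v') :=
    h.mono inf_le_left inf_le_left
  have dr {u v u' v' : α} (h : Disjoint v v') : Disjoint (u ⊓ v) (u' ⊓ v') :=
    h.mono inf_le_right inf_le_right
  have hx : x ∈ closure {x} ⊔ closure {c} := le_sup_left (b := closure {c}) (subset_closure rfl)
  have hc : c ∈ closure {x} ⊔ closure {c} := le_sup_right (a := closure {x}) (subset_closure rfl)
  have hfour := four_le_encard_atoms hp hq hr hs (dr disjoint_compl_right) (dl disjoint_compl_right)
    (dl disjoint_compl_right) (dl disjoint_compl_right) (dl disjoint_compl_right)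
    (dr disjoint_compl_right) (inf_mem hx hc) (inf_mem hx (compl_mem hc))
    (inf_mem (compl_mem hx) hc) (inf_mem (compl_mem hx) (compl_mem hc))
  intro h
  exact absurd (hfour.trans h) (by norm_num)

lemma compatible_closure_singleton_iff : Compatible (closure {x}) (closure {c}) ↔
    closure {x} ≤ principalDual c ∨ closure {x} ≤ principalDual cᶜ := by
  simp only [closure_singleton_le_iff, mem_principalDual, compl_compl]
  refine ⟨fun h => ?_, ?_⟩
  · by_contra! hn
    exact not_compatible_closure_singleton hn.1.1 hn.1.2 hn.2.1 hn.2.2 h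
  · rintro ((h | h) | h | h)
    · exact compatible_closure_singleton_of_le h
    · rw [← closure_singleton_compl c]
      exact (compatible_closure_singleton_of_le h).symm
    · rw [← closure_singleton_compl c]
      exact compatible_closure_singleton_of_le h
    · exact (compatible_closure_singleton_of_le h).symm

lemma exists_le_of_closure_singleton_le (h : closure {x} ≤ principalDual c) :
    ∃ y : α, closure {y} = closure {x} ∧ y ≤ c := by
  rcases closure_singleton_le_iff.1 h with h | h
  exacts [⟨x, rfl, h⟩, ⟨xᶜ, closure_singleton_compl x, compl_le_iff_compl_le.1 h⟩]

lemma not_separates_of_le_principalDual {X Y : BooleanSubalgebra α} (hX : X ≤ principalDual c)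
    (hY : Y ≤ principalDual c) : ¬Separates (closure {c}) X Y := by
  rintro ⟨W, hW, hWXY, hWc⟩
  obtain ⟨w, rfl⟩ := exists_eq_closure_singleton_of_isAtom hW
  exact hWc (compatible_closure_singleton_iff.2 (Or.inl (hWXY.trans (sup_le hX hY))))

lemma separates_of_le_principalDual {X Y : BooleanSubalgebra α} (hX : IsAtom X) (hY : IsAtom Y)
    (hXc : X ≤ principalDual c) (hYc : Y ≤ principalDual cᶜ) (hXne : X ≠ closure {c})
    (hYne : Y ≠ closure {c}) : Separates (closure {c}) X Y := by
  obtain ⟨x₀, rfl⟩ := exists_eq_closure_singleton_of_isAtom hX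
  obtain ⟨y₀, rfl⟩ := exists_eq_closure_singleton_of_isAtom hY
  obtain ⟨x, hxx₀, hx⟩ := exists_le_of_closure_singleton_le hXc
  obtain ⟨y, hyy₀, hy⟩ := exists_le_of_closure_singleton_le hYc
  rw [← hxx₀] at hX hXne ⊢
  rw [← hyy₀] at hY hYne ⊢
  have hx₀ : x ≠ ⊥ := (isAtom_closure_singleton_iff.1 hX).1
  have hy₀ : y ≠ ⊥ := (isAtom_closure_singleton_iff.1 hY).1
  have hxc : x ≠ c := by rintro rfl; exact hXne rfl
  have hyc : y ≠ cᶜ := by rintro rfl; exact hYne (closure_singleton_compl c)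
  have hout : ¬(x ⊔ y ≤ c ∨ cᶜ ≤ x ⊔ y) ∧ ¬(x ⊔ y ≤ cᶜ ∨ c ≤ x ⊔ y) := by
    refine ⟨not_or.2 ⟨fun h => hy₀ ?_, fun h => hyc ?_⟩,
      not_or.2 ⟨fun h => hx₀ ?_, fun h => hxc ?_⟩⟩
    · exact le_bot_iff.1 ((le_inf (le_sup_right.trans h) hy).trans inf_compl_eq_bot.le)
    · exact le_antisymm hy (Disjoint.left_le_of_le_sup_left h (disjoint_compl_left.mono_right hx))
    · exact le_bot_iff.1 ((le_inf hx (le_sup_left.trans h)).trans inf_compl_eq_bot.le)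
    · exact le_antisymm hx
        (Disjoint.left_le_of_le_sup_right h (disjoint_compl_right.mono_right hy))
  refine ⟨closure {x ⊔ y}, isAtom_closure_singleton_iff.2 ⟨?_, ?_⟩, ?_, ?_⟩
  · rintro h
    exact hout.1 (Or.inl (h ▸ bot_le))
  · rintro h
    exact hout.1 (Or.inr (h ▸ le_top))
  · exact closure_singleton_le_iff.2 (sup_mem (le_sup_left (b := closure {y}) (subset_closure rfl))
      (le_sup_right (a := closure {x}) (subset_closure rfl)))
  · rw [compatible_closure_singleton_iff, closure_singleton_le_iff, closure_singleton_le_iff,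
      mem_principalDual, mem_principalDual, compl_compl]
    exact not_or.2 hout

end BooleanAlgebra

section Transfer

variable {α γ : Type*} [BooleanAlgebra α] [BooleanAlgebra γ]
  (ψ : BooleanSubalgebra α ≃o BooleanSubalgebra γ) {X X₀ : BooleanSubalgebra α} {a a' b : α}
  {c c' d : γ}

lemma exists_map_closure_singleton (a : α) : ∃ c : γ, ψ (closure {a}) = closure {c} := by
  rcases closure_singleton_eq_bot_or_isAtom a with h | h
  · exact ⟨⊥, by rw [h, ψ.map_bot, eq_comm, closure_singleton_eq_bot_iff]; exact Or.inl rfl⟩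
  · exact exists_eq_closure_singleton_of_isAtom ((ψ.isAtom_iff _).2 h)

lemma map_le_iff_forall_isAtom {L : BooleanSubalgebra α} {M : BooleanSubalgebra γ} :
    ψ L ≤ M ↔ ∀ X, IsAtom X → X ≤ L → ψ X ≤ M := by
  simp only [← ψ.le_symm_apply]
  exact le_iff_atom_le_imp

lemma map_le_principalDual_or (hac : ψ (closure {a}) = closure {c}) (hX : IsAtom X)
    (hXa : X ≤ principalDual a ∨ X ≤ principalDual aᶜ) :
    ψ X ≤ principalDual c ∨ ψ X ≤ principalDual cᶜ := by
  obtain ⟨x, rfl⟩ := exists_eq_closure_singleton_of_isAtom hX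
  obtain ⟨x', hx'⟩ := exists_map_closure_singleton ψ x
  rwa [hx', ← compatible_closure_singleton_iff, ← hx', ← hac, compatible_map_iff,
    compatible_closure_singleton_iff]

/-- Atoms on the same side of `a` cannot be separated by `closure {a}`, atoms on opposite
sides are; so `ψ` preserves sides, and one atom already fixes the orientation. -/
lemma map_principalDual_le (hac : ψ (closure {a}) = closure {c}) (hX₀ : IsAtom X₀)
    (hX₀a : X₀ ≤ principalDual a) (hX₀ne : X₀ ≠ closure {a}) (hX₀c : ψ X₀ ≤ principalDual c) :
    ψ (principalDual a) ≤ principalDual c ∧ ψ (principalDual aᶜ) ≤ principalDual cᶜ := by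
  have hψX₀ : ψ X₀ ≠ closure {c} := hac ▸ ψ.injective.ne hX₀ne
  refine ⟨(map_le_iff_forall_isAtom ψ).2 fun X hX hXa => ?_,
    (map_le_iff_forall_isAtom ψ).2 fun Y hY hYa => ?_⟩
  · by_cases hXa' : X = closure {a}
    · rw [hXa', hac]
      exact closure_singleton_le_principalDual c
    refine (map_le_principalDual_or ψ hac hX (Or.inl hXa)).resolve_right fun hXc => ?_
    refine not_separates_of_le_principalDual hX₀a hXa ?_
    rw [← separates_map_iff ψ, hac]
    exact separates_of_le_principalDual ((ψ.isAtom_iff _).2 hX₀) ((ψ.isAtom_iff _).2 hX) hX₀c hXc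
      hψX₀ (hac ▸ ψ.injective.ne hXa')
  · by_cases hYa' : Y = closure {a}
    · rw [hYa', hac]
      exact closure_singleton_le_principalDual_compl c
    refine (map_le_principalDual_or ψ hac hY (Or.inr hYa)).resolve_left fun hYc => ?_
    refine not_separates_of_le_principalDual hX₀c hYc ?_
    rw [← hac, separates_map_iff]
    exact separates_of_le_principalDual hX₀ hY hX₀a hYa hX₀ne hYa'

lemma symm_map_principalDual_le (ha : IsAtom (closure {a}))
    (h : ψ (principalDual a) ≤ principalDual c) (h' : ψ (principalDual aᶜ) ≤ principalDual cᶜ) :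
    ψ.symm (principalDual c) ≤ principalDual a := by
  have hac : ψ (closure {a}) = closure {c} := by
    have hle : ψ (closure {a}) ≤ closure {c} := by
      rw [← principalDual_inf_principalDual_compl, ψ.map_inf,
        ← principalDual_inf_principalDual_compl]
      exact inf_le_inf h h'
    exact (le_closure_singleton_iff.1 hle).resolve_left ((ψ.isAtom_iff _).2 ha).ne_bot
  have hca : ψ.symm (closure {c}) = closure {a} := by rw [← hac, ψ.symm_apply_apply]
  refine (map_le_iff_forall_isAtom ψ.symm).2 fun X hX hXc => ?_
  rcases map_le_principalDual_or ψ.symm hca hX (Or.inl hXc) with hXa | hXa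
  · exact hXa
  have hXcc : X ≤ closure {c} := by
    rw [← principalDual_inf_principalDual_compl]
    exact le_inf hXc (ψ.symm_apply_le.1 hXa |>.trans h')
  rw [(le_closure_singleton_iff.1 hXcc).resolve_left hX.ne_bot, hca]
  exact closure_singleton_le_principalDual a

/-- The graph of the isomorphism `φ*` induced by `ψ`. -/
def MapsPrincipalDual (a : α) (c : γ) : Prop :=
  ψ (principalDual a) = principalDual c ∧ ψ (principalDual aᶜ) = principalDual cᶜ

variable {ψ}

lemma MapsPrincipalDual.compl (h : MapsPrincipalDual ψ a c) : MapsPrincipalDual ψ aᶜ cᶜ := by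
  rw [MapsPrincipalDual, compl_compl, compl_compl]
  exact h.symm

lemma mapsPrincipalDual_symm_iff : MapsPrincipalDual ψ.symm c a ↔ MapsPrincipalDual ψ a c := by
  simp only [MapsPrincipalDual, ψ.symm_apply_eq, eq_comm]

lemma MapsPrincipalDual.map_closure_singleton (h : MapsPrincipalDual ψ a c) :
    ψ (closure {a}) = closure {c} := by
  rw [← principalDual_inf_principalDual_compl, ψ.map_inf, h.1, h.2,
    principalDual_inf_principalDual_compl]

variable (ψ)

lemma mapsPrincipalDual_bot : MapsPrincipalDual ψ ⊥ ⊥ := by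
  simp [MapsPrincipalDual]

lemma exists_mapsPrincipalDual_of_isAtom_le (ha : IsAtom (closure {a})) (hX₀ : IsAtom X₀)
    (hX₀a : X₀ ≤ principalDual a) (hne : X₀ ≠ closure {a}) : ∃ c, MapsPrincipalDual ψ a c := by
  have ha' : IsAtom (closure {aᶜ}) := by rwa [closure_singleton_compl]
  have key (c : γ) (hac : ψ (closure {a}) = closure {c}) (hc : ψ X₀ ≤ principalDual c) :
      MapsPrincipalDual ψ a c := by
    obtain ⟨h, h'⟩ := map_principalDual_le ψ hac hX₀ hX₀a hne hc
    refine ⟨le_antisymm h (ψ.symm_apply_le.1 (symm_map_principalDual_le ψ ha h h')),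
      le_antisymm h' (ψ.symm_apply_le.1 (symm_map_principalDual_le ψ ha' h' ?_))⟩
    rwa [compl_compl, compl_compl]
  obtain ⟨c, hac⟩ := exists_map_closure_singleton ψ a
  rcases map_le_principalDual_or ψ hac hX₀ (Or.inl hX₀a) with h | h
  · exact ⟨c, key c hac h⟩
  · exact ⟨cᶜ, key cᶜ (by rwa [closure_singleton_compl]) h⟩

lemma exists_mapsPrincipalDual (hα : ∀ a : α, closure {a} ≠ ⊤) (a : α) :
    ∃ c, MapsPrincipalDual ψ a c := by
  rcases closure_singleton_eq_bot_or_isAtom a with h | ha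
  · rcases closure_singleton_eq_bot_iff.1 h with rfl | rfl
    · exact ⟨⊥, mapsPrincipalDual_bot ψ⟩
    · exact ⟨⊤, by simpa using (mapsPrincipalDual_bot ψ).compl⟩
  obtain ⟨X₀, hX₀, hX₀a, hne⟩ : ∃ X₀, IsAtom X₀ ∧
      (X₀ ≤ principalDual a ∨ X₀ ≤ principalDual aᶜ) ∧ X₀ ≠ closure {a} := by
    by_contra! h
    refine hα a (eq_top_iff.2 ?_)
    rw [← principalDual_sup_principalDual_compl a, sup_le_iff, le_iff_atom_le_imp,
      le_iff_atom_le_imp]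
    exact ⟨fun X hX hXa => (h X hX (Or.inl hXa)).le, fun X hX hXa => (h X hX (Or.inr hXa)).le⟩
  rcases hX₀a with h | h
  · exact exists_mapsPrincipalDual_of_isAtom_le ψ ha hX₀ h hne
  · rw [← closure_singleton_compl] at ha hne
    obtain ⟨c, hc⟩ := exists_mapsPrincipalDual_of_isAtom_le ψ ha hX₀ h hne
    exact ⟨cᶜ, by simpa using hc.compl⟩

variable {ψ}

lemma MapsPrincipalDual.unique (hγ : ∀ c : γ, closure {c} ≠ ⊤) (h : MapsPrincipalDual ψ a c)
    (h' : MapsPrincipalDual ψ a c') : c = c' := by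
  have e₁ : principalDual c = principalDual c' := h.1.symm.trans h'.1
  have e₂ : principalDual cᶜ = principalDual c'ᶜ := h.2.symm.trans h'.2
  refine (eq_or_eq_compl_of_principalDual_eq e₁ e₂).resolve_right ?_
  rintro rfl
  exact hγ c' (closure_singleton_eq_top_of_principalDual_eq e₁.symm)

lemma MapsPrincipalDual.injective (hα : ∀ a : α, closure {a} ≠ ⊤) (h : MapsPrincipalDual ψ a c)
    (h' : MapsPrincipalDual ψ a' c) : a = a' :=
  (mapsPrincipalDual_symm_iff.2 h).unique hα (mapsPrincipalDual_symm_iff.2 h')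

lemma MapsPrincipalDual.mono (hα : ∀ a : α, closure {a} ≠ ⊤) (hγ : ∀ c : γ, closure {c} ≠ ⊤)
    (hac : MapsPrincipalDual ψ a c) (hbd : MapsPrincipalDual ψ b d) (hab : a ≤ b) : c ≤ d := by
  have h₁ : c ∈ principalDual d := by
    refine (?_ : principalDual c ≤ principalDual d) (self_mem_principalDual c)
    rw [← hac.1, ← hbd.1]
    exact ψ.monotone (principalDual_mono hab)
  have h₂ : dᶜ ∈ principalDual cᶜ := by
    refine (?_ : principalDual dᶜ ≤ principalDual cᶜ) (self_mem_principalDual dᶜ)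
    rw [← hac.2, ← hbd.2]
    exact ψ.monotone (principalDual_mono (compl_le_compl hab))
  rw [mem_principalDual] at h₁ h₂
  rw [compl_compl, compl_le_compl_iff_le] at h₂
  rcases h₁ with h₁ | h₁
  · exact h₁
  rcases h₂ with h₂ | h₂
  · exact h₂
  obtain rfl : c = dᶜ := le_antisymm h₂ h₁
  obtain rfl : a = bᶜ := hac.injective hα hbd.compl
  obtain rfl : b = ⊤ := compl_le_self.1 hab
  rw [hac.unique hγ (by simpa using mapsPrincipalDual_bot ψ)]
  exact bot_le

variable (ψ)

theorem exists_orderIso_of_forall_closure_singleton_ne_top (hα : ∀ a : α, closure {a} ≠ ⊤) :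
    ∃ f : α ≃o γ, ∀ L, (ψ L : Set γ) = f '' L := by
  have hγ (c : γ) : closure {c} ≠ ⊤ := fun hc => by
    obtain ⟨a, ha⟩ := exists_map_closure_singleton ψ.symm c
    exact hα a (by rw [← ha, hc, ψ.symm.map_top])
  obtain ⟨f, hf⟩ := exists_orderIso_of_rel (MapsPrincipalDual ψ) (exists_mapsPrincipalDual ψ hα)
    (fun c => (exists_mapsPrincipalDual ψ.symm hγ c).imp fun _ h => mapsPrincipalDual_symm_iff.1 h)
    fun _ _ _ _ h h' => ⟨h.mono hα hγ h',
      (mapsPrincipalDual_symm_iff.2 h).mono hγ hα (mapsPrincipalDual_symm_iff.2 h')⟩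
  refine ⟨f, fun L => Set.ext fun y => ?_⟩
  obtain ⟨x, rfl⟩ := f.surjective y
  rw [f.injective.mem_set_image, SetLike.mem_coe, SetLike.mem_coe, ← closure_singleton_le_iff,
    ← closure_singleton_le_iff, ← (hf x).map_closure_singleton, ψ.le_iff_le]

lemma nonempty_orderIso_of_closure_singleton_eq_top {a : α} {c : γ} (ha : closure {a} = ⊤)
    (hc : closure {c} = ⊤) (hbot : a = ⊥ ↔ c = ⊥) (htop : a = ⊤ ↔ c = ⊤) (hα : (⊥ : α) ≠ ⊤)
    (hγ : (⊥ : γ) ≠ ⊤) : Nonempty (α ≃o γ) := by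
  have hα₄ (x : α) : x = ⊥ ∨ x = ⊤ ∨ x = a ∨ x = aᶜ := mem_closure_singleton.1 (ha ▸ mem_top)
  have hγ₄ (y : γ) : y = ⊥ ∨ y = ⊤ ∨ y = c ∨ y = cᶜ := mem_closure_singleton.1 (hc ▸ mem_top)
  let R (x : α) (y : γ) : Prop := x = ⊥ ∧ y = ⊥ ∨ x = ⊤ ∧ y = ⊤ ∨ x = a ∧ y = c ∨ x = aᶜ ∧ y = cᶜ
  have hR (x : α) : ∃ y, R x y := by
    rcases hα₄ x with h | h | h | h
    exacts [⟨⊥, .inl ⟨h, rfl⟩⟩, ⟨⊤, .inr (.inl ⟨h, rfl⟩)⟩, ⟨c, .inr (.inr (.inl ⟨h, rfl⟩))⟩,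
      ⟨cᶜ, .inr (.inr (.inr ⟨h, rfl⟩))⟩]
  have hR' (y : γ) : ∃ x, R x y := by
    rcases hγ₄ y with h | h | h | h
    exacts [⟨⊥, .inl ⟨rfl, h⟩⟩, ⟨⊤, .inr (.inl ⟨rfl, h⟩)⟩, ⟨a, .inr (.inr (.inl ⟨rfl, h⟩))⟩,
      ⟨aᶜ, .inr (.inr (.inr ⟨rfl, h⟩))⟩]
  have hle ⦃x x' y y'⦄ (h : R x y) (h' : R x' y') : x ≤ x' ↔ y ≤ y' := by
    rcases h with ⟨rfl, rfl⟩ | ⟨rfl, rfl⟩ | ⟨rfl, rfl⟩ | ⟨rfl, rfl⟩ <;>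
      rcases h' with ⟨rfl, rfl⟩ | ⟨rfl, rfl⟩ | ⟨rfl, rfl⟩ | ⟨rfl, rfl⟩ <;>
      simp [hbot, htop, hα.symm, hγ.symm, le_compl_self, compl_le_self]
  obtain ⟨f, -⟩ := exists_orderIso_of_rel R hR hR' hle
  exact ⟨f⟩

theorem exists_orderIso_of_closure_singleton_eq_top (hα : (⊥ : α) ≠ ⊤) (hγ : (⊥ : γ) ≠ ⊤)
    {a : α} (ha : closure {a} = ⊤) : ∃ f : α ≃o γ, ∀ L, (ψ L : Set γ) = f '' L := by
  obtain ⟨f⟩ : Nonempty (α ≃o γ) := by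
    rcases closure_singleton_eq_bot_or_isAtom a with h | h
    · refine nonempty_orderIso_of_closure_singleton_eq_top (a := ⊥) (c := ⊥)
        (by rw [closure_singleton_bot, ← h, ha])
        (by rw [closure_singleton_bot, ← ψ.map_bot, ← h, ha, ψ.map_top]) (by simp)
        (by simp [hα, hγ]) hα hγ
    · obtain ⟨c, hc⟩ := exists_map_closure_singleton ψ a
      have hc' : IsAtom (closure {c}) := hc ▸ (ψ.isAtom_iff _).2 h
      rw [isAtom_closure_singleton_iff] at h hc'
      exact nonempty_orderIso_of_closure_singleton_eq_top ha (by rw [← hc, ha, ψ.map_top])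
        (by simp [h.1, hc'.1]) (by simp [h.2, hc'.2]) hα hγ
  refine ⟨f, fun L => ?_⟩
  rcases le_closure_singleton_iff.1 (ha ▸ le_top : L ≤ closure {a}) with rfl | rfl
  · rw [ψ.map_bot, coe_bot, coe_bot, Set.image_pair, f.map_bot, f.map_top]
  · rw [ha, ψ.map_top, coe_top, coe_top, Set.image_univ_of_surjective f.surjective]

theorem exists_orderIso_image_eq (hα : (⊥ : α) ≠ ⊤) (hγ : (⊥ : γ) ≠ ⊤) :
    ∃ f : α ≃o γ, ∀ L, (ψ L : Set γ) = f '' L := by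
  by_cases h : ∃ a : α, closure {a} = ⊤
  · obtain ⟨a, ha⟩ := h
    exact exists_orderIso_of_closure_singleton_eq_top ψ hα hγ ha
  · exact exists_orderIso_of_forall_closure_singleton_ne_top ψ (not_exists.1 h)

end Transfer

def orderIsoBooleanSubalgebra (α : Type*) [BooleanAlgebra α] :
    BASub α ≃o BooleanSubalgebra α where
  toFun s :=
    { carrier := s.1
      supClosed' := fun _ ha _ hb => s.2.2.2.2.1 _ ha _ hb
      infClosed' := fun _ ha _ hb => s.2.2.2.1 _ ha _ hb
      compl_mem' := fun ha => s.2.2.2.2.2 _ ha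
      bot_mem' := s.2.1 }
  invFun L := ⟨L, L.bot_mem, L.top_mem, fun _ ha _ hb => L.inf_mem ha hb,
    fun _ ha _ hb => L.sup_mem ha hb, fun _ ha => L.compl_mem ha⟩
  left_inv _ := rfl
  right_inv _ := rfl
  map_rel_iff' := Iff.rfl

end Sachs

/-- Sachs' theorem: a lattice isomorphism `φ : Sub(B) → Sub(C)` between subalgebra
lattices of Boolean algebras is induced by a Boolean algebra isomorphism
`φ* : B → C`, i.e. `φ x = φ*[x]` for every subalgebra `x`; moreover `φ*` is unique
provided `B` does not have exactly four elements. -/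
theorem stmt_11 {γ : Type*} [BooleanAlgebra γ] (hβ : (⊥ : β) ≠ ⊤) (hγ : (⊥ : γ) ≠ ⊤)
    (φ : BASub β ≃o BASub γ) :
    ∃ f : β ≃o γ,
      (∀ x : BASub β, (φ x : Set γ) = f '' (x : Set β)) ∧
      (Nat.card β ≠ 4 →
        ∀ g : β ≃o γ, (∀ x : BASub β, (φ x : Set γ) = g '' (x : Set β)) →
          ∀ c : β, g c = f c) := by
  let eβ := Sachs.orderIsoBooleanSubalgebra β
  let ψ := eβ.symm.trans (φ.trans (Sachs.orderIsoBooleanSubalgebra γ))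
  obtain ⟨f, hf⟩ := Sachs.exists_orderIso_image_eq ψ hβ hγ
  refine ⟨f, fun x => hf (eβ x), fun h4 g hg c => ?_⟩
  have hγ4 : ¬IsAtom (⊤ : BooleanSubalgebra γ) := by
    rw [← ψ.map_top, ψ.isAtom_iff]
    exact mt BooleanSubalgebra.card_eq_four_of_isAtom_top h4
  rw [BooleanSubalgebra.orderIso_eq_of_image_eq hγ4 fun L => (hg (eβ.symm L)).symm.trans (hf L)]
end
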